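/- arXiv:2605.10504 — 3 statements merged into one kernel-verified Lean document; each statement's English description precedes it below -/
import Mathlib

section
/- (Pathwise premature-logit growth, Theorem 1.) Let X ∈ ℝ^{n×d}, W_Q, W_K ∈ ℝ^{d×d_k}, E ∈ ℝ^{n×n}, let P ∈ ℝ^{d×d} be an orthogonal projector, set X_P = X P, G_Q = Xᵀ E X W_K / √d_k, G_K = Xᵀ Eᵀ X W_Q / √d_k, and for step sizes η_Q, η_K ≥ 0 define W_Q⁺ = W_Q − η_Q G_Q, W_K⁺ = W_K − η_K G_K, B = W_Q W_Kᵀ, B⁺ = W_Q⁺(W_K⁺)ᵀ, and ΔZ_P = X_P P(B⁺ − B)P X_Pᵀ / √d_k. Then ‖ΔZ_P‖_F ≤ (‖X_P‖_op² · ‖X_P‖_F · ‖E‖_op / d_k) · (η_Q · ‖X W_K W_Kᵀ P‖_F + η_K · ‖X W_Q W_Qᵀ P‖_F) + η_Q η_K · ‖X_P‖_op² · ‖X_P‖_F² · ‖E‖_op² · ‖X W_K‖_F · ‖X W_Q‖_F / d_k^{3/2}. -/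
open Matrix

/-- Frobenius norm of a real matrix. -/
noncomputable def frobNorm {a b : ℕ} (A : Matrix (Fin a) (Fin b) ℝ) : ℝ :=
  Real.sqrt (∑ i, ∑ j, (A i j) ^ 2)

/-- ℓ²→ℓ² operator norm of a real matrix. -/
noncomputable def opNorm {a b : ℕ} (A : Matrix (Fin a) (Fin b) ℝ) : ℝ :=
  ‖(Matrix.toEuclideanLin A).toContinuousLinearMap‖

/-- Gradient of the attention logits `Z = X W_Q W_Kᵀ Xᵀ / √d_k` with respect to `W_Q`:
`G_Q = Xᵀ E X W_K / √d_k`. -/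
noncomputable def gradQ {n d dk : ℕ} (X : Matrix (Fin n) (Fin d) ℝ)
    (E : Matrix (Fin n) (Fin n) ℝ) (WK : Matrix (Fin d) (Fin dk) ℝ) :
    Matrix (Fin d) (Fin dk) ℝ :=
  (Real.sqrt (dk : ℝ))⁻¹ • (Xᵀ * E * X * WK)

/-- Gradient of the attention logits with respect to `W_K`: `G_K = Xᵀ Eᵀ X W_Q / √d_k`. -/
noncomputable def gradK {n d dk : ℕ} (X : Matrix (Fin n) (Fin d) ℝ)
    (E : Matrix (Fin n) (Fin n) ℝ) (WQ : Matrix (Fin d) (Fin dk) ℝ) :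
    Matrix (Fin d) (Fin dk) ℝ :=
  (Real.sqrt (dk : ℝ))⁻¹ • (Xᵀ * Eᵀ * X * WQ)

/-- One-step change of the immature logit component
`ΔZ_P = X_P P (B⁺ − B) P X_Pᵀ / √d_k`, where `X_P = X P`, `B = W_Q W_Kᵀ`,
`B⁺ = (W_Q − η_Q G_Q)(W_K − η_K G_K)ᵀ`. -/
noncomputable def deltaZP {n d dk : ℕ} (X : Matrix (Fin n) (Fin d) ℝ)
    (E : Matrix (Fin n) (Fin n) ℝ) (WQ WK : Matrix (Fin d) (Fin dk) ℝ)
    (P : Matrix (Fin d) (Fin d) ℝ) (ηQ ηK : ℝ) :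
    Matrix (Fin n) (Fin n) ℝ :=
  (Real.sqrt (dk : ℝ))⁻¹ •
    ((X * P) *
      (P * ((WQ - ηQ • gradQ X E WK) * (WK - ηK • gradK X E WQ)ᵀ - WQ * WKᵀ) * P) *
      (X * P)ᵀ)

section Helpers

lemma frobNorm_nonneg' {a b : ℕ} (A : Matrix (Fin a) (Fin b) ℝ) : 0 ≤ frobNorm A :=
  Real.sqrt_nonneg _

lemma opNorm_nonneg' {a b : ℕ} (A : Matrix (Fin a) (Fin b) ℝ) : 0 ≤ opNorm A :=
  norm_nonneg _

section FrobInstance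
attribute [local instance] Matrix.frobeniusNormedAddCommGroup Matrix.frobeniusNormedSpace

lemma frobNorm_eq_norm {a b : ℕ} (A : Matrix (Fin a) (Fin b) ℝ) : frobNorm A = ‖A‖ := by
  rw [Matrix.frobenius_norm_def, frobNorm, Real.sqrt_eq_rpow]
  congr 1
  refine Finset.sum_congr rfl fun i _ => Finset.sum_congr rfl fun j _ => ?_
  rw [Real.norm_eq_abs, show ((2:ℝ)) = ((2:ℕ):ℝ) by norm_num, Real.rpow_natCast, sq_abs]

lemma frobNorm_add_le {a b : ℕ} (A B : Matrix (Fin a) (Fin b) ℝ) :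
    frobNorm (A + B) ≤ frobNorm A + frobNorm B := by
  simp only [frobNorm_eq_norm]; exact norm_add_le A B

lemma frobNorm_smul {a b : ℕ} (c : ℝ) (A : Matrix (Fin a) (Fin b) ℝ) :
    frobNorm (c • A) = |c| * frobNorm A := by
  simp only [frobNorm_eq_norm]; rw [norm_smul, Real.norm_eq_abs]

lemma frobNorm_transpose {a b : ℕ} (A : Matrix (Fin a) (Fin b) ℝ) :
    frobNorm Aᵀ = frobNorm A := by
  simp only [frobNorm_eq_norm]; exact Matrix.frobenius_norm_transpose A

lemma frobNorm_mul_le {a b c : ℕ} (A : Matrix (Fin a) (Fin b) ℝ)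
    (B : Matrix (Fin b) (Fin c) ℝ) :
    frobNorm (A * B) ≤ frobNorm A * frobNorm B := by
  simp only [frobNorm_eq_norm]; exact Matrix.frobenius_norm_mul A B

end FrobInstance

section OpInstance
open scoped Matrix.Norms.L2Operator

lemma opNorm_eq_norm {a b : ℕ} (A : Matrix (Fin a) (Fin b) ℝ) : opNorm A = ‖A‖ := rfl

lemma opNorm_transpose {a b : ℕ} (A : Matrix (Fin a) (Fin b) ℝ) : opNorm Aᵀ = opNorm A := by
  have h : Aᵀ = Aᴴ := by ext i j; simp [Matrix.conjTranspose_apply]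
  rw [opNorm_eq_norm, opNorm_eq_norm, h, Matrix.l2_opNorm_conjTranspose]

end OpInstance

lemma sqrt_mulVec_le {a b : ℕ} (A : Matrix (Fin a) (Fin b) ℝ) (v : Fin b → ℝ) :
    Real.sqrt (∑ i, (A.mulVec v i)^2) ≤ opNorm A * Real.sqrt (∑ j, (v j)^2) := by
  have h := (Matrix.toEuclideanLin A).toContinuousLinearMap.le_opNorm
      ((WithLp.equiv 2 (Fin b → ℝ)).symm v)
  simp only [LinearMap.coe_toContinuousLinearMap', Matrix.toEuclideanLin_apply_piLp_toLp,
    EuclideanSpace.norm_eq, WithLp.equiv_symm_apply, PiLp.toLp_apply, Real.norm_eq_abs, sq_abs] at h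
  exact h

lemma opNorm_mul_frobNorm {a b c : ℕ} (A : Matrix (Fin a) (Fin b) ℝ)
    (B : Matrix (Fin b) (Fin c) ℝ) :
    frobNorm (A * B) ≤ opNorm A * frobNorm B := by
  have h0 : 0 ≤ opNorm A * frobNorm B := mul_nonneg (opNorm_nonneg' A) (frobNorm_nonneg' B)
  rw [frobNorm, ← Real.sqrt_sq h0]
  apply Real.sqrt_le_sqrt
  rw [Finset.sum_comm]
  have key : ∀ j : Fin c, ∑ i, ((A * B) i j)^2 ≤ opNorm A ^ 2 * ∑ k, (B k j)^2 := by
    intro j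
    have h1 := sqrt_mulVec_le A (fun k => B k j)
    have h2 : ∀ i, (A * B) i j = A.mulVec (fun k => B k j) i := by
      intro i; simp [Matrix.mul_apply, Matrix.mulVec, dotProduct]
    have h3 : Real.sqrt (∑ i, ((A * B) i j)^2) ≤ opNorm A * Real.sqrt (∑ k, (B k j)^2) := by
      simpa [h2] using h1
    have h4 := pow_le_pow_left₀ (Real.sqrt_nonneg _) h3 2
    rw [Real.sq_sqrt (Finset.sum_nonneg fun i _ => sq_nonneg _)] at h4
    calc ∑ i, ((A * B) i j)^2 ≤ (opNorm A * Real.sqrt (∑ k, (B k j)^2))^2 := h4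
      _ = opNorm A ^ 2 * ∑ k, (B k j)^2 := by
          rw [mul_pow, Real.sq_sqrt (Finset.sum_nonneg fun k _ => sq_nonneg _)]
  calc ∑ j, ∑ i, ((A * B) i j)^2 ≤ ∑ j, opNorm A ^ 2 * ∑ k, (B k j)^2 :=
        Finset.sum_le_sum fun j _ => key j
    _ = (opNorm A * frobNorm B)^2 := by
        rw [← Finset.mul_sum, mul_pow, frobNorm,
          Real.sq_sqrt (Finset.sum_nonneg fun i _ => Finset.sum_nonneg fun k _ => sq_nonneg (B i k)),
          Finset.sum_comm]

lemma opNormT_mul_frobNorm {a b c : ℕ} (A : Matrix (Fin b) (Fin a) ℝ)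
    (B : Matrix (Fin b) (Fin c) ℝ) :
    frobNorm (Aᵀ * B) ≤ opNorm A * frobNorm B := by
  rw [← opNorm_transpose A]; exact opNorm_mul_frobNorm _ _

end Helpers

/-- Pathwise premature-logit growth, Theorem 1. -/
theorem pathwise_premature_logit_growth
    (n d dk : ℕ) (hdk : 0 < dk)
    (X : Matrix (Fin n) (Fin d) ℝ)
    (WQ WK : Matrix (Fin d) (Fin dk) ℝ)
    (E : Matrix (Fin n) (Fin n) ℝ)
    (P : Matrix (Fin d) (Fin d) ℝ)
    (hP1 : Pᵀ = P) (hP2 : P * P = P)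
    (ηQ ηK : ℝ) (hηQ : 0 ≤ ηQ) (hηK : 0 ≤ ηK) :
    frobNorm (deltaZP X E WQ WK P ηQ ηK)
      ≤ opNorm (X * P) ^ 2 * frobNorm (X * P) * opNorm E / (dk : ℝ) *
          (ηQ * frobNorm (X * WK * WKᵀ * P) + ηK * frobNorm (X * WQ * WQᵀ * P))
        + ηQ * ηK * opNorm (X * P) ^ 2 * frobNorm (X * P) ^ 2 * opNorm E ^ 2 *
            frobNorm (X * WK) * frobNorm (X * WQ) / ((dk : ℝ) ^ ((3 : ℝ) / 2)) := by
  set t : ℝ := Real.sqrt (dk : ℝ) with ht_def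
  have ht : 0 < t := Real.sqrt_pos.mpr (by exact_mod_cast hdk)
  set s : ℝ := t⁻¹ with hs_def
  have hs : 0 ≤ s := inv_nonneg.mpr ht.le
  -- the three expanded terms
  set A1 : Matrix (Fin n) (Fin n) ℝ :=
    X*(P*(P*(Xᵀ*(E*(X*(WK*(WKᵀ*(P*(P*Xᵀ))))))))) with hA1_def
  set A2 : Matrix (Fin n) (Fin n) ℝ :=
    X*(P*(P*(WQ*(WQᵀ*(Xᵀ*(E*(X*(P*(P*Xᵀ))))))))) with hA2_def
  set A3 : Matrix (Fin n) (Fin n) ℝ :=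
    X*(P*(P*(Xᵀ*(E*(X*(WK*(WQᵀ*(Xᵀ*(E*(X*(P*(P*Xᵀ)))))))))))) with hA3_def
  have hexp : deltaZP X E WQ WK P ηQ ηK =
      (-(ηQ * (s * s))) • A1 + (-(ηK * (s * s))) • A2 + ((ηQ * ηK) * (s * (s * s))) • A3 := by
    rw [hA1_def, hA2_def, hA3_def, hs_def, ht_def]
    simp only [deltaZP, gradQ, gradK, Matrix.sub_mul, Matrix.mul_sub, Matrix.mul_add,
      Matrix.add_mul, Matrix.transpose_sub, Matrix.transpose_smul, Matrix.transpose_mul,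
      Matrix.transpose_transpose, hP1, Matrix.smul_mul, Matrix.mul_smul, smul_smul,
      smul_sub, smul_add, sub_mul, mul_sub, Matrix.mul_assoc]
    module
  -- reassociated forms
  have hA1eq : A1 = (X*P) * ((X*P)ᵀ * (E * ((X*WK*WKᵀ*P) * (X*P)ᵀ))) := by
    rw [hA1_def]; simp only [Matrix.transpose_mul, Matrix.transpose_transpose, hP1,
      Matrix.mul_assoc]
  have hA2eq : A2 = (X*P) * ((X*WQ*WQᵀ*P)ᵀ * (E * ((X*P) * (X*P)ᵀ))) := by
    rw [hA2_def]; simp only [Matrix.transpose_mul, Matrix.transpose_transpose, hP1,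
      Matrix.mul_assoc]
  have hA3eq : A3 = (X*P) * ((X*P)ᵀ * (E * ((X*WK) * ((X*WQ)ᵀ * (E * ((X*P) * (X*P)ᵀ)))))) := by
    rw [hA3_def]; simp only [Matrix.transpose_mul, Matrix.transpose_transpose, hP1,
      Matrix.mul_assoc]
  have hop := opNorm_nonneg' (X*P)
  have hopE := opNorm_nonneg' E
  -- bound A1
  have hB1 : frobNorm A1 ≤ opNorm (X*P) * (opNorm (X*P) * (opNorm E *
      (frobNorm (X*WK*WKᵀ*P) * frobNorm (X*P)))) := by
    rw [hA1eq]
    calc frobNorm ((X*P) * ((X*P)ᵀ * (E * ((X*WK*WKᵀ*P) * (X*P)ᵀ))))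
        ≤ opNorm (X*P) * frobNorm ((X*P)ᵀ * (E * ((X*WK*WKᵀ*P) * (X*P)ᵀ))) :=
          opNorm_mul_frobNorm _ _
      _ ≤ opNorm (X*P) * (opNorm (X*P) * frobNorm (E * ((X*WK*WKᵀ*P) * (X*P)ᵀ))) := by
          apply mul_le_mul_of_nonneg_left (opNormT_mul_frobNorm _ _) hop
      _ ≤ opNorm (X*P) * (opNorm (X*P) * (opNorm E * frobNorm ((X*WK*WKᵀ*P) * (X*P)ᵀ))) := by
          apply mul_le_mul_of_nonneg_left _ hop
          exact mul_le_mul_of_nonneg_left (opNorm_mul_frobNorm _ _) hop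
      _ ≤ opNorm (X*P) * (opNorm (X*P) * (opNorm E *
            (frobNorm (X*WK*WKᵀ*P) * frobNorm ((X*P)ᵀ)))) := by
          apply mul_le_mul_of_nonneg_left _ hop
          apply mul_le_mul_of_nonneg_left _ hop
          exact mul_le_mul_of_nonneg_left (frobNorm_mul_le _ _) hopE
      _ = opNorm (X*P) * (opNorm (X*P) * (opNorm E *
            (frobNorm (X*WK*WKᵀ*P) * frobNorm (X*P)))) := by rw [frobNorm_transpose]
  -- bound A2
  have hB2 : frobNorm A2 ≤ opNorm (X*P) * (frobNorm (X*WQ*WQᵀ*P) * (opNorm E *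
      (opNorm (X*P) * frobNorm (X*P)))) := by
    rw [hA2eq]
    calc frobNorm ((X*P) * ((X*WQ*WQᵀ*P)ᵀ * (E * ((X*P) * (X*P)ᵀ))))
        ≤ opNorm (X*P) * frobNorm ((X*WQ*WQᵀ*P)ᵀ * (E * ((X*P) * (X*P)ᵀ))) :=
          opNorm_mul_frobNorm _ _
      _ ≤ opNorm (X*P) * (frobNorm ((X*WQ*WQᵀ*P)ᵀ) * frobNorm (E * ((X*P) * (X*P)ᵀ))) :=
          mul_le_mul_of_nonneg_left (frobNorm_mul_le _ _) hop
      _ ≤ opNorm (X*P) * (frobNorm ((X*WQ*WQᵀ*P)ᵀ) * (opNorm E * frobNorm ((X*P) * (X*P)ᵀ))) := by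
          apply mul_le_mul_of_nonneg_left _ hop
          exact mul_le_mul_of_nonneg_left (opNorm_mul_frobNorm _ _) (frobNorm_nonneg' _)
      _ ≤ opNorm (X*P) * (frobNorm ((X*WQ*WQᵀ*P)ᵀ) * (opNorm E *
            (opNorm (X*P) * frobNorm ((X*P)ᵀ)))) := by
          apply mul_le_mul_of_nonneg_left _ hop
          apply mul_le_mul_of_nonneg_left _ (frobNorm_nonneg' _)
          exact mul_le_mul_of_nonneg_left (opNorm_mul_frobNorm _ _) hopE
      _ = opNorm (X*P) * (frobNorm (X*WQ*WQᵀ*P) * (opNorm E *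
            (opNorm (X*P) * frobNorm (X*P)))) := by rw [frobNorm_transpose, frobNorm_transpose]
  -- bound A3
  have hB3 : frobNorm A3 ≤ opNorm (X*P) * (opNorm (X*P) * (opNorm E * (frobNorm (X*WK) *
      (frobNorm (X*WQ) * (opNorm E * (frobNorm (X*P) * frobNorm (X*P))))))) := by
    rw [hA3eq]
    calc frobNorm ((X*P) * ((X*P)ᵀ * (E * ((X*WK) * ((X*WQ)ᵀ * (E * ((X*P) * (X*P)ᵀ)))))))
        ≤ opNorm (X*P) * frobNorm ((X*P)ᵀ * (E * ((X*WK) * ((X*WQ)ᵀ * (E * ((X*P) * (X*P)ᵀ)))))) :=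
          opNorm_mul_frobNorm _ _
      _ ≤ opNorm (X*P) * (opNorm (X*P) *
            frobNorm (E * ((X*WK) * ((X*WQ)ᵀ * (E * ((X*P) * (X*P)ᵀ)))))) :=
          mul_le_mul_of_nonneg_left (opNormT_mul_frobNorm _ _) hop
      _ ≤ opNorm (X*P) * (opNorm (X*P) * (opNorm E *
            frobNorm ((X*WK) * ((X*WQ)ᵀ * (E * ((X*P) * (X*P)ᵀ)))))) := by
          apply mul_le_mul_of_nonneg_left _ hop
          exact mul_le_mul_of_nonneg_left (opNorm_mul_frobNorm _ _) hop
      _ ≤ opNorm (X*P) * (opNorm (X*P) * (opNorm E * (frobNorm (X*WK) *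
            frobNorm ((X*WQ)ᵀ * (E * ((X*P) * (X*P)ᵀ)))))) := by
          apply mul_le_mul_of_nonneg_left _ hop
          apply mul_le_mul_of_nonneg_left _ hop
          exact mul_le_mul_of_nonneg_left (frobNorm_mul_le _ _) hopE
      _ ≤ opNorm (X*P) * (opNorm (X*P) * (opNorm E * (frobNorm (X*WK) *
            (frobNorm ((X*WQ)ᵀ) * frobNorm (E * ((X*P) * (X*P)ᵀ)))))) := by
          apply mul_le_mul_of_nonneg_left _ hop
          apply mul_le_mul_of_nonneg_left _ hop
          apply mul_le_mul_of_nonneg_left _ hopE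
          exact mul_le_mul_of_nonneg_left (frobNorm_mul_le _ _) (frobNorm_nonneg' _)
      _ ≤ opNorm (X*P) * (opNorm (X*P) * (opNorm E * (frobNorm (X*WK) *
            (frobNorm ((X*WQ)ᵀ) * (opNorm E * frobNorm ((X*P) * (X*P)ᵀ)))))) := by
          apply mul_le_mul_of_nonneg_left _ hop
          apply mul_le_mul_of_nonneg_left _ hop
          apply mul_le_mul_of_nonneg_left _ hopE
          apply mul_le_mul_of_nonneg_left _ (frobNorm_nonneg' _)
          exact mul_le_mul_of_nonneg_left (opNorm_mul_frobNorm _ _) (frobNorm_nonneg' _)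
      _ ≤ opNorm (X*P) * (opNorm (X*P) * (opNorm E * (frobNorm (X*WK) *
            (frobNorm ((X*WQ)ᵀ) * (opNorm E * (frobNorm (X*P) * frobNorm ((X*P)ᵀ))))))) := by
          apply mul_le_mul_of_nonneg_left _ hop
          apply mul_le_mul_of_nonneg_left _ hop
          apply mul_le_mul_of_nonneg_left _ hopE
          apply mul_le_mul_of_nonneg_left _ (frobNorm_nonneg' _)
          apply mul_le_mul_of_nonneg_left _ (frobNorm_nonneg' _)
          exact mul_le_mul_of_nonneg_left (frobNorm_mul_le _ _) hopE
      _ = opNorm (X*P) * (opNorm (X*P) * (opNorm E * (frobNorm (X*WK) *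
            (frobNorm (X*WQ) * (opNorm E * (frobNorm (X*P) * frobNorm (X*P))))))) := by
          rw [frobNorm_transpose, frobNorm_transpose]
  -- triangle inequality
  have htri : frobNorm (deltaZP X E WQ WK P ηQ ηK) ≤
      (ηQ * (s * s)) * frobNorm A1 + (ηK * (s * s)) * frobNorm A2 +
        ((ηQ * ηK) * (s * (s * s))) * frobNorm A3 := by
    rw [hexp]
    calc frobNorm ((-(ηQ * (s * s))) • A1 + (-(ηK * (s * s))) • A2 +
          ((ηQ * ηK) * (s * (s * s))) • A3)
        ≤ frobNorm ((-(ηQ * (s * s))) • A1 + (-(ηK * (s * s))) • A2) +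
            frobNorm (((ηQ * ηK) * (s * (s * s))) • A3) := frobNorm_add_le _ _
      _ ≤ frobNorm ((-(ηQ * (s * s))) • A1) + frobNorm ((-(ηK * (s * s))) • A2) +
            frobNorm (((ηQ * ηK) * (s * (s * s))) • A3) := by
          exact add_le_add (frobNorm_add_le _ _) le_rfl
      _ = (ηQ * (s * s)) * frobNorm A1 + (ηK * (s * s)) * frobNorm A2 +
            ((ηQ * ηK) * (s * (s * s))) * frobNorm A3 := by
          rw [frobNorm_smul, frobNorm_smul, frobNorm_smul, abs_neg, abs_neg,
            abs_of_nonneg (by positivity), abs_of_nonneg (by positivity),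
            abs_of_nonneg (by positivity)]
  -- combine
  have hdkt : (dk : ℝ) = t ^ 2 := by
    rw [ht_def, Real.sq_sqrt (by positivity)]
  have h32 : ((dk : ℝ)) ^ ((3:ℝ)/2) = t ^ 3 := by
    rw [hdkt, ← Real.rpow_natCast t 2, ← Real.rpow_mul ht.le,
      show ((2:ℕ):ℝ) * ((3:ℝ)/2) = ((3:ℕ):ℝ) by norm_num, Real.rpow_natCast]
  have hcomb : (ηQ * (s * s)) * (opNorm (X*P) * (opNorm (X*P) * (opNorm E *
        (frobNorm (X*WK*WKᵀ*P) * frobNorm (X*P))))) +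
      (ηK * (s * s)) * (opNorm (X*P) * (frobNorm (X*WQ*WQᵀ*P) * (opNorm E *
        (opNorm (X*P) * frobNorm (X*P))))) +
      ((ηQ * ηK) * (s * (s * s))) * (opNorm (X*P) * (opNorm (X*P) * (opNorm E *
        (frobNorm (X*WK) * (frobNorm (X*WQ) * (opNorm E *
          (frobNorm (X*P) * frobNorm (X*P)))))))) =
      opNorm (X * P) ^ 2 * frobNorm (X * P) * opNorm E / (dk : ℝ) *
          (ηQ * frobNorm (X * WK * WKᵀ * P) + ηK * frobNorm (X * WQ * WQᵀ * P))
        + ηQ * ηK * opNorm (X * P) ^ 2 * frobNorm (X * P) ^ 2 * opNorm E ^ 2 *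
            frobNorm (X * WK) * frobNorm (X * WQ) / ((dk : ℝ) ^ ((3 : ℝ) / 2)) := by
    rw [h32, hdkt, hs_def]
    field_simp
  calc frobNorm (deltaZP X E WQ WK P ηQ ηK)
      ≤ (ηQ * (s * s)) * frobNorm A1 + (ηK * (s * s)) * frobNorm A2 +
          ((ηQ * ηK) * (s * (s * s))) * frobNorm A3 := htri
    _ ≤ (ηQ * (s * s)) * (opNorm (X*P) * (opNorm (X*P) * (opNorm E *
          (frobNorm (X*WK*WKᵀ*P) * frobNorm (X*P))))) +
        (ηK * (s * s)) * (opNorm (X*P) * (frobNorm (X*WQ*WQᵀ*P) * (opNorm E *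
          (opNorm (X*P) * frobNorm (X*P))))) +
        ((ηQ * ηK) * (s * (s * s))) * (opNorm (X*P) * (opNorm (X*P) * (opNorm E *
          (frobNorm (X*WK) * (frobNorm (X*WQ) * (opNorm E *
            (frobNorm (X*P) * frobNorm (X*P))))))))  := by
        apply add_le_add (add_le_add _ _) _
        · exact mul_le_mul_of_nonneg_left hB1 (by positivity)
        · exact mul_le_mul_of_nonneg_left hB2 (by positivity)
        · exact mul_le_mul_of_nonneg_left hB3 (by positivity)
    _ = _ := hcomb
end

section
/- (Upper-Q/K learning-rate suppression.) Under the setup of the learning-rate scaling identity, for any 0 < α < 1 the scaled update satisfies ‖ΔZ_P^{(α)}‖_F ≤ α · ‖ΔZ_P^{(1)}‖_F + (α − α²) · η_Q η_K · ‖X_P‖_op² · ‖X_P‖_F² · ‖E‖_op² · ‖X W_K‖_F · ‖X W_Q‖_F / d_k^{3/2}. In particular, reducing the early upper-Q/K learning rate by the factor α reduces the first-order immature-logit growth by exactly the factor α, up to a second-order remainder proportional to η_Q η_K. -/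
open Matrix

namespace UQKAux

section Frob
attribute [local instance] Matrix.frobeniusSeminormedAddCommGroup Matrix.frobeniusNormedSpace

lemma frob_eq {a b : ℕ} (A : Matrix (Fin a) (Fin b) ℝ) : frobNorm A = ‖A‖ := by
  rw [Matrix.frobenius_norm_def, frobNorm, Real.sqrt_eq_rpow]
  congr 1
  simp [Real.norm_eq_abs, sq_abs, Real.rpow_two]

lemma frob_add_le {a b : ℕ} (A B : Matrix (Fin a) (Fin b) ℝ) :
    frobNorm (A + B) ≤ frobNorm A + frobNorm B := by
  simp only [frob_eq]; exact norm_add_le _ _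

lemma frob_smul (c : ℝ) {a b : ℕ} (A : Matrix (Fin a) (Fin b) ℝ) :
    frobNorm (c • A) = |c| * frobNorm A := by
  simp only [frob_eq]; rw [norm_smul, Real.norm_eq_abs]

lemma frob_transpose {a b : ℕ} (A : Matrix (Fin a) (Fin b) ℝ) : frobNorm Aᵀ = frobNorm A := by
  simp only [frob_eq]; exact Matrix.frobenius_norm_transpose A

end Frob

section Op
open scoped Matrix.Norms.L2Operator

lemma op_eq {a b : ℕ} (A : Matrix (Fin a) (Fin b) ℝ) : opNorm A = ‖A‖ := rfl

lemma op_mul_le {a b c : ℕ} (A : Matrix (Fin a) (Fin b) ℝ) (B : Matrix (Fin b) (Fin c) ℝ) :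
    opNorm (A * B) ≤ opNorm A * opNorm B := by
  simp only [op_eq]; exact Matrix.l2_opNorm_mul A B

lemma op_transpose {a b : ℕ} (A : Matrix (Fin a) (Fin b) ℝ) : opNorm Aᵀ = opNorm A := by
  have h : Aᴴ = Aᵀ := by ext; simp
  simp only [op_eq, ← h]; exact Matrix.l2_opNorm_conjTranspose A

end Op

lemma frob_nonneg {a b : ℕ} (A : Matrix (Fin a) (Fin b) ℝ) : 0 ≤ frobNorm A :=
  Real.sqrt_nonneg _

lemma op_nonneg {a b : ℕ} (A : Matrix (Fin a) (Fin b) ℝ) : 0 ≤ opNorm A := norm_nonneg _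

lemma frob_sq {a b : ℕ} (A : Matrix (Fin a) (Fin b) ℝ) :
    frobNorm A ^ 2 = ∑ i, ∑ j, (A i j) ^ 2 := by
  rw [frobNorm, Real.sq_sqrt]
  exact Finset.sum_nonneg fun i _ => Finset.sum_nonneg fun j _ => sq_nonneg _

lemma le_of_sq_le_sq {x y : ℝ} (_hx : 0 ≤ x) (hy : 0 ≤ y) (h : x ^ 2 ≤ y ^ 2) : x ≤ y := by
  nlinarith

lemma mulVec_bound {a b : ℕ} (A : Matrix (Fin a) (Fin b) ℝ) (x : EuclideanSpace ℝ (Fin b)) :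
    ‖(WithLp.equiv 2 (Fin a → ℝ)).symm (A *ᵥ (WithLp.equiv 2 (Fin b → ℝ)) x)‖
      ≤ opNorm A * ‖x‖ := by
  have h := (Matrix.toEuclideanLin A).toContinuousLinearMap.le_opNorm x
  have h2 : (Matrix.toEuclideanLin A).toContinuousLinearMap x
      = (WithLp.equiv 2 (Fin a → ℝ)).symm (A *ᵥ (WithLp.equiv 2 (Fin b → ℝ)) x) := by
    simp [Matrix.toEuclideanLin_apply]
  rw [h2] at h
  exact h

lemma frob_mul_le_op_frob {a b c : ℕ} (A : Matrix (Fin a) (Fin b) ℝ)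
    (B : Matrix (Fin b) (Fin c) ℝ) :
    frobNorm (A * B) ≤ opNorm A * frobNorm B := by
  have h0 : 0 ≤ opNorm A * frobNorm B := mul_nonneg (op_nonneg A) (frob_nonneg B)
  refine le_of_sq_le_sq (frob_nonneg _) h0 ?_
  have key : ∀ j : Fin c, (∑ i, ((A * B) i j) ^ 2) ≤ opNorm A ^ 2 * ∑ i, (B i j) ^ 2 := by
    intro j
    set x : EuclideanSpace ℝ (Fin b) := (WithLp.equiv 2 (Fin b → ℝ)).symm (fun i => B i j)
      with hxdef
    have h1 := mulVec_bound A x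
    have hxn : ‖x‖ ^ 2 = ∑ i, (B i j) ^ 2 := by
      rw [EuclideanSpace.norm_eq, Real.sq_sqrt (Finset.sum_nonneg fun i _ => sq_nonneg _)]
      simp [hxdef, Real.norm_eq_abs, sq_abs]
    have hyn : ‖(WithLp.equiv 2 (Fin a → ℝ)).symm (A *ᵥ (WithLp.equiv 2 (Fin b → ℝ)) x)‖ ^ 2
        = ∑ i, ((A * B) i j) ^ 2 := by
      rw [EuclideanSpace.norm_eq, Real.sq_sqrt (Finset.sum_nonneg fun i _ => sq_nonneg _)]
      congr 1
      ext i
      simp [hxdef, Real.norm_eq_abs, sq_abs, Matrix.mulVec, Matrix.mul_apply, dotProduct]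
    calc ∑ i, ((A * B) i j) ^ 2 = _ ^ 2 := hyn.symm
      _ ≤ (opNorm A * ‖x‖) ^ 2 := by
          apply pow_le_pow_left₀ (norm_nonneg _) h1
      _ = opNorm A ^ 2 * ∑ i, (B i j) ^ 2 := by rw [mul_pow, hxn]
  calc frobNorm (A * B) ^ 2 = ∑ j, ∑ i, ((A * B) i j) ^ 2 := by
        rw [frob_sq]; exact Finset.sum_comm
    _ ≤ ∑ j, opNorm A ^ 2 * ∑ i, (B i j) ^ 2 := Finset.sum_le_sum fun j _ => key j
    _ = opNorm A ^ 2 * ∑ j : Fin c, ∑ i, (B i j) ^ 2 := by rw [← Finset.mul_sum]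
    _ = (opNorm A * frobNorm B) ^ 2 := by
        rw [mul_pow, frob_sq]; congr 1; exact Finset.sum_comm

lemma op_le_frob {a b : ℕ} (A : Matrix (Fin a) (Fin b) ℝ) : opNorm A ≤ frobNorm A := by
  rw [opNorm]
  refine ContinuousLinearMap.opNorm_le_bound _ (frob_nonneg A) fun x => ?_
  have h2 : (Matrix.toEuclideanLin A).toContinuousLinearMap x
      = (WithLp.equiv 2 (Fin a → ℝ)).symm (A *ᵥ (WithLp.equiv 2 (Fin b → ℝ)) x) := by
    simp [Matrix.toEuclideanLin_apply]
  rw [h2]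
  refine le_of_sq_le_sq (norm_nonneg _) (mul_nonneg (frob_nonneg A) (norm_nonneg x)) ?_
  have hyn : ‖(WithLp.equiv 2 (Fin a → ℝ)).symm (A *ᵥ (WithLp.equiv 2 (Fin b → ℝ)) x)‖ ^ 2
      = ∑ i, (∑ j, A i j * x j) ^ 2 := by
    rw [EuclideanSpace.norm_eq, Real.sq_sqrt (Finset.sum_nonneg fun i _ => sq_nonneg _)]
    simp [Real.norm_eq_abs, sq_abs, Matrix.mulVec, dotProduct]
  have hxn : ‖x‖ ^ 2 = ∑ j, (x j) ^ 2 := by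
    rw [EuclideanSpace.norm_eq, Real.sq_sqrt (Finset.sum_nonneg fun i _ => sq_nonneg _)]
    simp [Real.norm_eq_abs, sq_abs]
  rw [hyn, mul_pow, frob_sq, hxn, Finset.sum_mul]
  refine Finset.sum_le_sum fun i _ => ?_
  exact Finset.sum_mul_sq_le_sq_mul_sq _ _ _

lemma frob_mul_le_frob_op {a b c : ℕ} (A : Matrix (Fin a) (Fin b) ℝ)
    (B : Matrix (Fin b) (Fin c) ℝ) :
    frobNorm (A * B) ≤ frobNorm A * opNorm B := by
  calc frobNorm (A * B) = frobNorm (Bᵀ * Aᵀ) := by rw [← transpose_mul, frob_transpose]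
    _ ≤ opNorm Bᵀ * frobNorm Aᵀ := frob_mul_le_op_frob _ _
    _ = frobNorm A * opNorm B := by rw [op_transpose, frob_transpose]; ring

lemma mid_identity {d dk : ℕ} (WQ WK gQ gK : Matrix (Fin d) (Fin dk) ℝ) (α ηQ ηK : ℝ) :
    (WQ - (α * ηQ) • gQ) * (WK - (α * ηK) • gK)ᵀ - WQ * WKᵀ
      = α • ((WQ - ηQ • gQ) * (WK - ηK • gK)ᵀ - WQ * WKᵀ)
        + ((α ^ 2 - α) * (ηQ * ηK)) • (gQ * gKᵀ) := by
  simp only [transpose_sub, transpose_smul, Matrix.sub_mul, Matrix.mul_sub, Matrix.smul_mul,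
    Matrix.mul_smul, smul_smul, smul_sub, smul_add, sub_smul, add_smul]
  module

lemma delta_decomp {n d dk : ℕ} (X : Matrix (Fin n) (Fin d) ℝ)
    (E : Matrix (Fin n) (Fin n) ℝ) (WQ WK : Matrix (Fin d) (Fin dk) ℝ)
    (P : Matrix (Fin d) (Fin d) ℝ) (α ηQ ηK : ℝ) :
    deltaZP X E WQ WK P (α * ηQ) (α * ηK)
      = α • deltaZP X E WQ WK P ηQ ηK
        + (((α ^ 2 - α) * (ηQ * ηK)) * ((Real.sqrt (dk : ℝ))⁻¹) ^ 3) •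
            ((X * P) * (P * ((Xᵀ * E * X * WK) * (Xᵀ * Eᵀ * X * WQ)ᵀ) * P) * (X * P)ᵀ) := by
  rw [deltaZP, deltaZP, mid_identity]
  simp only [gradQ, gradK, transpose_smul, Matrix.smul_mul, Matrix.mul_smul,
    Matrix.mul_add, Matrix.add_mul, smul_add, smul_smul]
  module

lemma N_eq {n d dk : ℕ} (X : Matrix (Fin n) (Fin d) ℝ)
    (E : Matrix (Fin n) (Fin n) ℝ) (WQ WK : Matrix (Fin d) (Fin dk) ℝ)
    (P : Matrix (Fin d) (Fin d) ℝ) (hP1 : Pᵀ = P) (hP2 : P * P = P) :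
    (X * P) * (P * ((Xᵀ * E * X * WK) * (Xᵀ * Eᵀ * X * WQ)ᵀ) * P) * (X * P)ᵀ
      = (((X * P) * (X * P)ᵀ * E) * (X * WK)) * ((X * WQ)ᵀ * (E * ((X * P) * (X * P)ᵀ))) := by
  have hPP : ∀ {k : ℕ} (Z : Matrix (Fin d) (Fin k) ℝ), P * (P * Z) = P * Z := fun Z => by
    rw [← Matrix.mul_assoc, hP2]
  simp only [transpose_mul, transpose_transpose, hP1, Matrix.mul_assoc, hPP]

end UQKAux

open UQKAux

/-- Upper-Q/K learning-rate suppression. -/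
theorem upper_qk_learning_rate_suppression
    (n d dk : ℕ) (hdk : 0 < dk)
    (X : Matrix (Fin n) (Fin d) ℝ)
    (WQ WK : Matrix (Fin d) (Fin dk) ℝ)
    (E : Matrix (Fin n) (Fin n) ℝ)
    (P : Matrix (Fin d) (Fin d) ℝ)
    (hP1 : Pᵀ = P) (hP2 : P * P = P)
    (α : ℝ) (hα0 : 0 < α) (hα1 : α < 1)
    (ηQ ηK : ℝ) (hηQ : 0 ≤ ηQ) (hηK : 0 ≤ ηK) :
    frobNorm (deltaZP X E WQ WK P (α * ηQ) (α * ηK))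
      ≤ α * frobNorm (deltaZP X E WQ WK P ηQ ηK)
        + (α - α ^ 2) * ηQ * ηK * opNorm (X * P) ^ 2 * frobNorm (X * P) ^ 2 *
            opNorm E ^ 2 * frobNorm (X * WK) * frobNorm (X * WQ) /
            ((dk : ℝ) ^ ((3 : ℝ) / 2)) := by
  set XP := X * P with hXP
  set N := (X * P) * (P * ((Xᵀ * E * X * WK) * (Xᵀ * Eᵀ * X * WQ)ᵀ) * P) * (X * P)ᵀ with hN
  set c : ℝ := ((α ^ 2 - α) * (ηQ * ηK)) * ((Real.sqrt (dk : ℝ))⁻¹) ^ 3 with hc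
  -- the exponent identity
  have hdk0 : (0 : ℝ) < (dk : ℝ) := by exact_mod_cast hdk
  have hs3 : ((Real.sqrt (dk : ℝ))⁻¹) ^ 3 = ((dk : ℝ) ^ ((3 : ℝ) / 2))⁻¹ := by
    rw [inv_pow]
    congr 1
    rw [Real.sqrt_eq_rpow, ← Real.rpow_natCast ((dk : ℝ) ^ ((1 : ℝ) / 2)) 3,
      ← Real.rpow_mul hdk0.le]
    norm_num
  -- the absolute value of the remainder coefficient
  have hα2 : α ^ 2 - α ≤ 0 := by nlinarith
  have habs : |c| = (α - α ^ 2) * ηQ * ηK * ((dk : ℝ) ^ ((3 : ℝ) / 2))⁻¹ := by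
    rw [hc, abs_mul, abs_mul, hs3,
      abs_of_nonpos hα2, abs_of_nonneg (mul_nonneg hηQ hηK),
      abs_of_nonneg (inv_nonneg.mpr (Real.rpow_nonneg hdk0.le _))]
    ring
  -- bound on the remainder matrix
  have hBnn : 0 ≤ opNorm XP * frobNorm XP * opNorm E * frobNorm (X * WK) :=
    mul_nonneg (mul_nonneg (mul_nonneg (op_nonneg _) (frob_nonneg _)) (op_nonneg _))
      (frob_nonneg _)
  have hC : opNorm (XP * XPᵀ) ≤ opNorm XP * frobNorm XP :=
    (op_mul_le XP XPᵀ).trans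
      (mul_le_mul_of_nonneg_left ((op_le_frob XPᵀ).trans (frob_transpose XP).le)
        (op_nonneg XP))
  have hCE : opNorm ((XP * XPᵀ) * E) ≤ opNorm XP * frobNorm XP * opNorm E :=
    (op_mul_le _ E).trans (mul_le_mul_of_nonneg_right hC (op_nonneg E))
  have hEC : opNorm (E * (XP * XPᵀ)) ≤ opNorm E * (opNorm XP * frobNorm XP) :=
    (op_mul_le E _).trans (mul_le_mul_of_nonneg_left hC (op_nonneg E))
  have hL : frobNorm (((XP * XPᵀ) * E) * (X * WK))
      ≤ opNorm XP * frobNorm XP * opNorm E * frobNorm (X * WK) :=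
    (frob_mul_le_op_frob _ _).trans (mul_le_mul_of_nonneg_right hCE (frob_nonneg _))
  have hR : opNorm ((X * WQ)ᵀ * (E * (XP * XPᵀ)))
      ≤ frobNorm (X * WQ) * (opNorm E * (opNorm XP * frobNorm XP)) :=
    (op_mul_le _ _).trans
      (mul_le_mul ((op_le_frob _).trans (frob_transpose _).le) hEC (op_nonneg _)
        (frob_nonneg _))
  have hNbound : frobNorm N
      ≤ opNorm XP ^ 2 * frobNorm XP ^ 2 * opNorm E ^ 2 * frobNorm (X * WK) *
          frobNorm (X * WQ) := by
    calc frobNorm N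
        = frobNorm ((((XP * XPᵀ) * E) * (X * WK)) * ((X * WQ)ᵀ * (E * (XP * XPᵀ)))) := by
          rw [hN, N_eq X E WQ WK P hP1 hP2]
      _ ≤ frobNorm (((XP * XPᵀ) * E) * (X * WK)) * opNorm ((X * WQ)ᵀ * (E * (XP * XPᵀ))) :=
          frob_mul_le_frob_op _ _
      _ ≤ (opNorm XP * frobNorm XP * opNorm E * frobNorm (X * WK)) *
            (frobNorm (X * WQ) * (opNorm E * (opNorm XP * frobNorm XP))) :=
          mul_le_mul hL hR (op_nonneg _) hBnn
      _ = opNorm XP ^ 2 * frobNorm XP ^ 2 * opNorm E ^ 2 * frobNorm (X * WK) *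
            frobNorm (X * WQ) := by ring
  -- main decomposition
  have hdec := delta_decomp X E WQ WK P α ηQ ηK
  calc frobNorm (deltaZP X E WQ WK P (α * ηQ) (α * ηK))
      = frobNorm (α • deltaZP X E WQ WK P ηQ ηK + c • N) := by rw [hdec]
    _ ≤ frobNorm (α • deltaZP X E WQ WK P ηQ ηK) + frobNorm (c • N) := frob_add_le _ _
    _ = α * frobNorm (deltaZP X E WQ WK P ηQ ηK) + |c| * frobNorm N := by
        rw [frob_smul, frob_smul, abs_of_pos hα0]
    _ ≤ α * frobNorm (deltaZP X E WQ WK P ηQ ηK)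
        + |c| * (opNorm XP ^ 2 * frobNorm XP ^ 2 * opNorm E ^ 2 * frobNorm (X * WK) *
            frobNorm (X * WQ)) := by
        exact add_le_add_right (mul_le_mul_of_nonneg_left hNbound (abs_nonneg c)) _
    _ = α * frobNorm (deltaZP X E WQ WK P ηQ ηK)
        + (α - α ^ 2) * ηQ * ηK * opNorm (X * P) ^ 2 * frobNorm (X * P) ^ 2 *
            opNorm E ^ 2 * frobNorm (X * WK) * frobNorm (X * WQ) /
            ((dk : ℝ) ^ ((3 : ℝ) / 2)) := by
        rw [habs, div_eq_mul_inv, ← hXP]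
        ring
end

section
/- (Entropy collapse requires logit range.) Let N ≥ 2, let z : {1,…,N} → ℝ be attention logits, and let p_j = exp(z_j) / Σ_{ℓ=1}^N exp(z_ℓ) be the softmax probabilities. Let 0 < ε < 1. If there exists an index j⋆ with p_{j⋆} ≥ 1 − ε, then max_j z_j − min_j z_j ≥ log((N−1)(1−ε)/ε). -/
/-- Entropy collapse requires logit range: if the softmax of logits
`z` over `N ≥ 2` keys places probability at least `1 − ε` on some key, then
`max_j z_j − min_j z_j ≥ log((N−1)(1−ε)/ε)`. -/
theorem entropy_collapse_requires_logit_range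
    (N : ℕ) (hN : 2 ≤ N) (z : Fin N → ℝ)
    (ε : ℝ) (hε0 : 0 < ε) (hε1 : ε < 1)
    (hconc : ∃ jstar : Fin N,
      Real.exp (z jstar) / (∑ ℓ, Real.exp (z ℓ)) ≥ 1 - ε) :
    (Finset.univ.sup' ⟨⟨0, by omega⟩, Finset.mem_univ _⟩ z)
        - (Finset.univ.inf' ⟨⟨0, by omega⟩, Finset.mem_univ _⟩ z)
      ≥ Real.log (((N : ℝ) - 1) * (1 - ε) / ε) := by
  obtain ⟨j, hj⟩ := hconc
  have ne : (Finset.univ : Finset (Fin N)).Nonempty := ⟨⟨0, by omega⟩, Finset.mem_univ _⟩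
  set M := Finset.univ.sup' ne z with hM
  set m := Finset.univ.inf' ne z with hm
  set S : ℝ := ∑ ℓ, Real.exp (z ℓ) with hS
  have hSpos : 0 < S := Finset.sum_pos (fun i _ => Real.exp_pos _) ne
  have h1ε : 0 < 1 - ε := by linarith
  -- exp (z j) ≥ (1-ε) S
  have hej : (1 - ε) * S ≤ Real.exp (z j) := (le_div_iff₀ hSpos).mp hj
  -- off-key sum
  have hsplit : Real.exp (z j) + ∑ ℓ ∈ Finset.univ.erase j, Real.exp (z ℓ) = S := by
    rw [hS, ← Finset.add_sum_erase _ _ (Finset.mem_univ j)]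
  have hcard : (Finset.univ.erase j).card = N - 1 := by
    rw [Finset.card_erase_of_mem (Finset.mem_univ j), Finset.card_univ, Fintype.card_fin]
  have hlow : ((N : ℝ) - 1) * Real.exp m ≤ ∑ ℓ ∈ Finset.univ.erase j, Real.exp (z ℓ) := by
    have : ∀ ℓ ∈ Finset.univ.erase j, Real.exp m ≤ Real.exp (z ℓ) := fun ℓ _ =>
      Real.exp_le_exp.mpr (Finset.inf'_le _ (Finset.mem_univ ℓ))
    calc ((N : ℝ) - 1) * Real.exp m = (Finset.univ.erase j).card * Real.exp m := by
          rw [hcard]; push_cast [Nat.cast_sub (by omega : 1 ≤ N)]; ring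
      _ ≤ ∑ ℓ ∈ Finset.univ.erase j, Real.exp (z ℓ) := by
          have := Finset.card_nsmul_le_sum _ _ _ this
          rwa [nsmul_eq_mul] at this
  have hMub : Real.exp (z j) ≤ Real.exp M :=
    Real.exp_le_exp.mpr (Finset.le_sup' _ (Finset.mem_univ j))
  -- (N-1) exp m ≤ ε S and exp M ≥ (1-ε) S
  have hεS : ((N : ℝ) - 1) * Real.exp m ≤ ε * S := by nlinarith
  have hkey : ((N : ℝ) - 1) * (1 - ε) / ε * Real.exp m ≤ Real.exp M := by
    rw [div_mul_eq_mul_div, div_le_iff₀ hε0]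
    nlinarith
  have hXpos : 0 < ((N : ℝ) - 1) * (1 - ε) / ε := by
    have : (1 : ℝ) ≤ (N : ℝ) - 1 := by
      have : (2 : ℝ) ≤ N := by exact_mod_cast hN
      linarith
    positivity
  rw [ge_iff_le, Real.log_le_iff_le_exp (by linarith)]
  calc ((N : ℝ) - 1) * (1 - ε) / ε
      ≤ Real.exp M / Real.exp m := by
        rw [le_div_iff₀ (Real.exp_pos m)]; exact hkey
    _ = Real.exp (M - m) := by rw [Real.exp_sub]
end
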